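/- Let p be a prime, q = p^n, and let f(X) = Σ_{j=0}^{n-1} α_j X^(p^j), g(X) = Σ_{j=0}^{n-1} β_j X^(p^j) be linearized polynomials over 𝔽_q whose induced maps on 𝔽_q satisfy g(x)·f(x⁻¹) = 1 for all x ∈ 𝔽_q*. Then there exist γ ∈ 𝔽_q* and 0 ≤ j ≤ n-1 such that g(x) = γ x^(p^j) and f(x) = γ⁻¹ x^(p^j) for all x ∈ 𝔽_q. -/

import Mathlib

/-!
Reversing the exponents of `f` turns the functional equation `g(x) f(x⁻¹) = 1` into
`G · A = X ^ p ^ (n - 1)` with `G = ∑ βⱼ X ^ pʲ` and `A = ∑ αⱼ X ^ (p ^ (n - 1) - pʲ)`, first as an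
identity of functions on `F` and then, both sides having degree `< p ^ n = q`, in `F[X]`. So `G`
divides a power of the prime `X` and is a monomial `γ X ^ i`; being a sum of monomials
`X ^ pʲ`, it forces `i = pʲ`, and `f(x) = g(x⁻¹)⁻¹` follows.
-/

open Polynomial Finset

namespace Polynomial

theorem exists_eq_C_mul_X_pow_of_dvd_X_pow {K : Type*} [Field K] {P : K[X]} {m : ℕ}
    (h : P ∣ X ^ m) : ∃ c ≠ 0, ∃ i, P = C c * X ^ i := by
  obtain ⟨i, -, u, hu⟩ := (dvd_prime_pow prime_X m).mp h
  obtain ⟨c, hc, hcu⟩ := isUnit_iff.mp u.isUnit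
  refine ⟨c⁻¹, inv_ne_zero hc.ne_zero, i, ?_⟩
  rw [← hu, ← hcu, mul_left_comm, ← C_mul, inv_mul_cancel₀ hc.ne_zero, C_1, mul_one]

variable {ι : Type*} {s : Finset ι} {e : ι → ℕ}

theorem exists_mem_eq_of_coeff_sum_C_mul_X_pow_ne_zero {R : Type*} [Semiring R] {a : ι → R}
    {i : ℕ} (h : (∑ j ∈ s, C (a j) * X ^ e j).coeff i ≠ 0) : ∃ j ∈ s, e j = i := by
  rw [finsetSum_coeff] at h
  obtain ⟨j, hj, hne⟩ := exists_ne_zero_of_sum_ne_zero h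
  exact ⟨j, hj, by_contra fun hji => hne (by simp [Ne.symm hji])⟩

theorem natDegree_sum_C_mul_X_pow_le {R : Type*} [Semiring R] {a : ι → R} {d : ℕ}
    (he : ∀ j ∈ s, e j ≤ d) : (∑ j ∈ s, C (a j) * X ^ e j).natDegree ≤ d :=
  natDegree_sum_le_of_forall_le _ _ fun j hj => (natDegree_C_mul_X_pow_le _ _).trans (he j hj)

theorem eval_sum_C_mul_X_pow {R : Type*} [CommSemiring R] {a : ι → R} (x : R) :
    (∑ j ∈ s, C (a j) * X ^ e j).eval x = ∑ j ∈ s, a j * x ^ e j := by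
  simp only [eval_finsetSum, eval_mul, eval_C, eval_pow, eval_X]

theorem eval_sum_C_mul_X_pow_sub {K : Type*} [Field K] {a : ι → K} {m : ℕ}
    (he : ∀ j ∈ s, e j ≤ m) {x : K} (hx : x ≠ 0) :
    (∑ j ∈ s, C (a j) * X ^ (m - e j)).eval x = x ^ m * ∑ j ∈ s, a j * x⁻¹ ^ e j := by
  rw [eval_sum_C_mul_X_pow, mul_sum]
  refine sum_congr rfl fun j hj => ?_
  rw [pow_sub₀ x hx (he j hj), inv_pow]
  ring

end Polynomial

theorem sum_C_mul_X_pow_mul_sum_C_mul_X_pow_sub_eq_X_pow {F : Type*} [Field F] [Fintype F]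
    {p n : ℕ} (hp : 1 < p) (hn : 0 < n) (hF : Fintype.card F = p ^ n) (α β : ℕ → F)
    (h : ∀ x : F, x ≠ 0 →
      (∑ j ∈ range n, β j * x ^ p ^ j) * (∑ j ∈ range n, α j * x⁻¹ ^ p ^ j) = 1) :
    (∑ j ∈ range n, C (β j) * X ^ p ^ j) * (∑ j ∈ range n, C (α j) * X ^ (p ^ (n - 1) - p ^ j))
      = X ^ p ^ (n - 1) := by
  have hpos : ∀ j, 0 < p ^ j := fun j => by positivity
  have hle : ∀ j ∈ range n, p ^ j ≤ p ^ (n - 1) := fun j hj =>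
    Nat.pow_le_pow_right (by omega) (by rw [mem_range] at hj; omega)
  apply eq_of_natDegree_lt_card_of_eval_eq _ _ Function.injective_id
  · intro x
    rcases eq_or_ne x 0 with rfl | hx
    · simp [eval_finsetSum, show p ≠ 0 by omega]
    · rw [id, eval_mul, eval_sum_C_mul_X_pow_sub hle hx, eval_sum_C_mul_X_pow,
        mul_left_comm, h x hx, mul_one, eval_X_pow]
  · have hA : (∑ j ∈ range n, C (α j) * X ^ (p ^ (n - 1) - p ^ j)).natDegree ≤ p ^ (n - 1) - 1 :=
      natDegree_sum_C_mul_X_pow_le fun j _ => by have := hpos j; omega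
    have hGA := natDegree_mul_le.trans (add_le_add (natDegree_sum_C_mul_X_pow_le (a := β) hle) hA)
    have hq : p ^ n = p ^ (n - 1) * p := by rw [← pow_succ, Nat.sub_add_cancel hn]
    have hqm := Nat.mul_le_mul_left (p ^ (n - 1)) hp
    have hm := hpos (n - 1)
    rw [natDegree_X_pow, hF, hq]
    generalize p ^ (n - 1) = m at *
    omega

theorem stmt_16 {p n : ℕ} (hp : p.Prime) (hn : 0 < n)
    {F : Type*} [Field F] [Fintype F] (hF : Fintype.card F = p ^ n)
    (α β : ℕ → F)
    (f g : F → F)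
    (hf : ∀ x : F, f x = ∑ j ∈ Finset.range n, α j * x ^ (p ^ j))
    (hg : ∀ x : F, g x = ∑ j ∈ Finset.range n, β j * x ^ (p ^ j))
    (h : ∀ x : F, x ≠ 0 → g x * f x⁻¹ = 1) :
    ∃ γ : F, γ ≠ 0 ∧ ∃ j : ℕ, j ≤ n - 1 ∧
      (∀ x : F, g x = γ * x ^ (p ^ j)) ∧ (∀ x : F, f x = γ⁻¹ * x ^ (p ^ j)) := by
  have hkey := sum_C_mul_X_pow_mul_sum_C_mul_X_pow_sub_eq_X_pow hp.one_lt hn hF α β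
    fun x hx => by rw [← hg, ← hf, h x hx]
  obtain ⟨γ, hγ, i, hG⟩ := exists_eq_C_mul_X_pow_of_dvd_X_pow (Dvd.intro _ hkey)
  have hcoeff : (∑ j ∈ range n, C (β j) * X ^ p ^ j).coeff i ≠ 0 := by simpa [hG] using hγ
  obtain ⟨j, hj, rfl⟩ := exists_mem_eq_of_coeff_sum_C_mul_X_pow_ne_zero hcoeff
  have hg' : ∀ x, g x = γ * x ^ p ^ j := fun x => by
    rw [hg, ← eval_sum_C_mul_X_pow, hG, eval_mul, eval_C, eval_X_pow]
  refine ⟨γ, hγ, j, by rw [mem_range] at hj; omega, hg', fun x => ?_⟩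
  rcases eq_or_ne x 0 with rfl | hx
  · simp [hf, hp.ne_zero]
  · have hinv := h x⁻¹ (inv_ne_zero hx)
    rw [hg', inv_inv, inv_pow] at hinv
    rw [eq_inv_mul_iff_mul_eq₀ hγ]
    field_simp at hinv
    exact hinv
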